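/- arXiv:1311.5265 — 3 statements merged into one kernel-verified Lean document; each statement's English description precedes it below -/
import Mathlib

section
/- Let S_0,…,S_{N-1} satisfy the Cuntz relations on H, let M be a closed subspace with orthogonal projection P_M, and let α(A) = Σ_i S_i A S_i*. Then M is invariant for all the operators S_i* (i.e., S_i* M ⊆ M for every i) if and only if P_M ≤ α(P_M). -/
open ContinuousLinearMap

/-! Put `Q = ∑ Sᵢ P Sᵢ*`. Because `Sᵢ* Sⱼ = δᵢⱼ`, `Q` is again an orthogonal projection, and for
projections `P ≤ Q ↔ Q P = P`. Multiplying `Q P = P` on the left by `Sⱼ*` gives `P Sⱼ* P = Sⱼ* P`,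
which says that `M = range P` is `Sⱼ*`-invariant; conversely, if `P Sᵢ* P = Sᵢ* P` for all `i`, then
`Q P = ∑ Sᵢ Sᵢ* P = P`. -/

section CuntzFamily

variable {R ι : Type*} [Ring R] [Fintype ι] [DecidableEq ι] {S T : ι → R}

lemma mul_sum_mul_mul_eq (hTS : ∀ i j, T i * S j = if i = j then 1 else 0) (p : R) (j : ι) :
    T j * ∑ i, S i * p * T i = p * T j := by
  simp only [Finset.mul_sum, ← mul_assoc, hTS, ite_mul, one_mul, zero_mul, Finset.sum_ite_eq,
    Finset.mem_univ, if_true]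

lemma sum_mul_mul_mul_eq (hTS : ∀ i j, T i * S j = if i = j then 1 else 0) (p : R) (j : ι) :
    (∑ i, S i * p * T i) * S j = S j * p := by
  simp only [Finset.sum_mul, mul_assoc, hTS, mul_ite, mul_one, mul_zero, Finset.sum_ite_eq',
    Finset.mem_univ, if_true]

lemma sum_mul_mul_mul_sum_mul_mul (hTS : ∀ i j, T i * S j = if i = j then 1 else 0) (p q : R) :
    (∑ i, S i * p * T i) * ∑ i, S i * q * T i = ∑ i, S i * (p * q) * T i := by
  simp only [Finset.mul_sum, ← mul_assoc, sum_mul_mul_mul_eq hTS]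

theorem sum_mul_mul_mul_eq_self_iff
    (hTS : ∀ i j, T i * S j = if i = j then 1 else 0) (hST : ∑ i, S i * T i = 1) (p : R) :
    (∑ i, S i * p * T i) * p = p ↔ ∀ j, p * T j * p = T j * p := by
  constructor
  · intro h j
    rw [← mul_sum_mul_mul_eq hTS, mul_assoc, h]
  · intro h
    calc (∑ i, S i * p * T i) * p = ∑ i, S i * (T i * p) := by
          rw [Finset.sum_mul]
          exact Finset.sum_congr rfl fun i _ => by rw [← h i]; simp only [mul_assoc]
      _ = p := by simp only [← mul_assoc, ← Finset.sum_mul, hST, one_mul]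

end CuntzFamily

theorem IsStarProjection.sum_mul_mul_star {R ι : Type*} [Ring R] [StarRing R] [Fintype ι]
    [DecidableEq ι] {S : ι → R} (hS : ∀ i j, star (S i) * S j = if i = j then 1 else 0) {p : R}
    (hp : IsStarProjection p) : IsStarProjection (∑ i, S i * p * star (S i)) where
  isIdempotentElem := by
    rw [IsIdempotentElem, sum_mul_mul_mul_sum_mul_mul hS, hp.isIdempotentElem.eq]
  isSelfAdjoint := isSelfAdjoint_sum _ fun i _ => hp.isSelfAdjoint.conjugate (S i)

lemma Submodule.mapsTo_iff_starProjection_mul_mul_eq {𝕜 E : Type*} [RCLike 𝕜]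
    [NormedAddCommGroup E] [InnerProductSpace 𝕜 E] (U : Submodule 𝕜 E)
    [U.HasOrthogonalProjection] (T : E →L[𝕜] E) :
    Set.MapsTo T U U ↔ U.starProjection * T * U.starProjection = T * U.starProjection := by
  refine (Module.End.mem_invtSubmodule_iff_mapsTo (f := (T : E →ₗ[𝕜] E))).symm.trans ?_
  conv_lhs => rw [← U.range_starProjection]
  exact (isIdempotentElem_starProjection U).range_mem_invtSubmodule_iff

theorem cuntz_invariant_iff_le_alpha_general
    {H : Type*} [NormedAddCommGroup H] [InnerProductSpace ℂ H] [CompleteSpace H]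
    (N : ℕ) (S : Fin N → H →L[ℂ] H)
    (hiso : ∀ i j : Fin N, adjoint (S i) ∘L S j = if i = j then 1 else 0)
    (hsum : ∑ i : Fin N, S i ∘L adjoint (S i) = 1)
    (M : Submodule ℂ H) [CompleteSpace M]
    (P : H →L[ℂ] H) (hP : P = M.subtypeL ∘L M.orthogonalProjectionOnto) :
    (∀ i : Fin N, ∀ x ∈ M, adjoint (S i) x ∈ M) ↔
      ((∑ i : Fin N, S i ∘L P ∘L adjoint (S i)) - P).IsPositive := by
  obtain rfl : P = M.starProjection := hP
  have hSS : ∀ i j, star (S i) * S j = if i = j then 1 else 0 := hiso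
  have hSS' : ∑ i, S i * star (S i) = 1 := hsum
  have hα : ∑ i, S i ∘L M.starProjection ∘L adjoint (S i) =
      ∑ i, S i * M.starProjection * star (S i) := by
    simp only [mul_assoc]; rfl
  have hP := isStarProjection_starProjection (U := M)
  rw [← le_def, hα, hP.le_iff_mul_eq_right (hP.sum_mul_mul_star hSS),
    sum_mul_mul_mul_eq_self_iff hSS hSS']
  exact forall_congr' fun i => M.mapsTo_iff_starProjection_mul_mul_eq (star (S i))

/-- `M` is invariant under every `S i*` iff `P_M ≤ α(P_M)`,
where `α(A) = ∑ i, S i A S i*` and the operator order is the positivity (Loewner) order. -/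
theorem cuntz_invariant_iff_le_alpha
    {H : Type*} [NormedAddCommGroup H] [InnerProductSpace ℂ H] [CompleteSpace H]
    (N : ℕ) (hN : 2 ≤ N) (S : Fin N → H →L[ℂ] H)
    (hiso : ∀ i j : Fin N, adjoint (S i) ∘L S j = if i = j then 1 else 0)
    (hsum : ∑ i : Fin N, S i ∘L adjoint (S i) = 1)
    (M : Submodule ℂ H) [CompleteSpace M]
    (P : H →L[ℂ] H) (hP : P = M.subtypeL ∘L M.orthogonalProjectionOnto) :
    (∀ i : Fin N, ∀ x ∈ M, adjoint (S i) x ∈ M) ↔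
      ((∑ i : Fin N, S i ∘L P ∘L adjoint (S i)) - P).IsPositive :=
  cuntz_invariant_iff_le_alpha_general N S hiso hsum M P hP
end

section
/- Let S_0,…,S_{N-1} satisfy the Cuntz relations on H and let M be a closed subspace invariant for all S_i* which is also cyclic (the closed span of all vectors S_I S_J* v with v ∈ M and I, J finite words equals H). Then for every v ∈ H and every ε > 0 there exists n_ε such that for every finite word I with |I| ≥ n_ε, ‖P_M S_I* v − S_I* v‖ < ε. -/
/-!
If `|K| ≥ |I|`, the first `|I|` letters of `K` either cancel `S_I` or annihilate it, so `S_K*`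
maps every generator `S_I S_J* u` (`u ∈ M`) into `M`, by invariance of `M` under the remaining
`S_k*`. The vectors sent into `M` by all long enough `S_K*` thus form a dense subspace. Given `v`,
pick `w` in it with `‖v - w‖ < ε`; as `S_K*` is a contraction, the distance from `S_K* v` to `M`
is at most `‖S_K* v - S_K* w‖ ≤ ‖v - w‖`.
-/

open ContinuousLinearMap

section CuntzWords

variable {𝕜 H ι : Type*} [RCLike 𝕜] [NormedAddCommGroup H] [InnerProductSpace 𝕜 H]
  [CompleteSpace H] (S : ι → H →L[𝕜] H)

theorem norm_adjoint_apply_le_of_adjoint_comp_self {T : H →L[𝕜] H}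
    (hT : adjoint T ∘L T = 1) (x : H) : ‖adjoint T x‖ ≤ ‖x‖ := by
  have hT_le : ‖T‖ ≤ 1 :=
    T.opNorm_le_bound zero_le_one fun y ↦ by
      rw [(norm_map_iff_adjoint_comp_self T).mpr hT y, one_mul]
  have hadj_le : ‖adjoint T‖ ≤ 1 := by rwa [LinearIsometryEquiv.norm_map]
  simpa using (adjoint T).le_of_opNorm_le hadj_le x

theorem adjoint_comp_self_list_prod_map (hS : ∀ i, adjoint (S i) ∘L S i = 1) (I : List ι) :
    adjoint (I.map S).prod ∘L (I.map S).prod = 1 := by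
  refine List.prod_induction (fun T ↦ adjoint T ∘L T = 1) (fun A B hA hB ↦ ?_)
    (by simp only [adjoint_one]; rfl) (List.forall_mem_map.mpr fun i _ ↦ hS i)
  calc adjoint (A * B) ∘L (A * B) = adjoint B ∘L (adjoint A ∘L A) ∘L B := by
        simp only [mul_def, adjoint_comp, comp_assoc]
    _ = 1 := by rw [hA]; exact hB

theorem adjoint_list_prod_map_apply_mem {M : Submodule 𝕜 H}
    (hM : ∀ i, ∀ x ∈ M, adjoint (S i) x ∈ M) (I : List ι) {x : H} (hx : x ∈ M) :
    adjoint (I.map S).prod x ∈ M := by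
  refine List.prod_induction (fun T ↦ ∀ x ∈ M, adjoint T x ∈ M) (fun A B hA hB y hy ↦ ?_)
    (by simp [adjoint_one]) (List.forall_mem_map.mpr fun i _ ↦ hM i) x hx
  simpa [mul_def, adjoint_comp] using hB _ (hA y hy)

theorem adjoint_list_prod_map_comp_of_length_eq [DecidableEq ι]
    (hS : ∀ i j, adjoint (S i) ∘L S j = if i = j then 1 else 0) :
    ∀ {J I : List ι}, J.length = I.length →
      adjoint (J.map S).prod ∘L (I.map S).prod = if J = I then 1 else 0
  | [], [], _ => by simp only [List.map_nil, List.prod_nil, adjoint_one]; rfl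
  | j :: J, i :: I, hlen => by
    have ih := adjoint_list_prod_map_comp_of_length_eq hS (J := J) (I := I) (by simpa using hlen)
    calc adjoint ((j :: J).map S).prod ∘L ((i :: I).map S).prod
        = adjoint (J.map S).prod ∘L (adjoint (S j) ∘L S i) ∘L (I.map S).prod := by
          simp only [List.map_cons, List.prod_cons, mul_def, adjoint_comp, comp_assoc]
      _ = if j :: J = i :: I then 1 else 0 := by
          rw [hS]
          by_cases hji : j = i
          · simp [hji, ih, one_def]
          · simp [hji]

def eventuallyAbsorbed (M : Submodule 𝕜 H) : Submodule 𝕜 H where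
  carrier := {x | ∃ n : ℕ, ∀ K : List ι, n ≤ K.length → adjoint (K.map S).prod x ∈ M}
  zero_mem' := ⟨0, fun _ _ ↦ by simp⟩
  add_mem' := by
    rintro x y ⟨m, hm⟩ ⟨n, hn⟩
    exact ⟨max m n, fun K hK ↦ by
      rw [map_add]; exact M.add_mem (hm K (le_of_max_le_left hK)) (hn K (le_of_max_le_right hK))⟩
  smul_mem' := by
    rintro c x ⟨n, hn⟩
    exact ⟨n, fun K hK ↦ by rw [map_smul]; exact M.smul_mem c (hn K hK)⟩

theorem list_prod_map_comp_adjoint_apply_mem_eventuallyAbsorbed [DecidableEq ι]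
    (hS : ∀ i j, adjoint (S i) ∘L S j = if i = j then 1 else 0) {M : Submodule 𝕜 H}
    (hM : ∀ i, ∀ x ∈ M, adjoint (S i) x ∈ M) (I J : List ι) {u : H} (hu : u ∈ M) :
    ((I.map S).prod ∘L adjoint (J.map S).prod) u ∈ eventuallyAbsorbed S M := by
  refine ⟨I.length, fun K hK ↦ ?_⟩
  set y := adjoint (J.map S).prod u
  have hy : y ∈ M := adjoint_list_prod_map_apply_mem S hM J hu
  have hsplit : adjoint (K.map S).prod ∘L (I.map S).prod =
      adjoint ((K.drop I.length).map S).prod ∘L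
        (adjoint ((K.take I.length).map S).prod ∘L (I.map S).prod) := by
    conv_lhs => rw [← List.take_append_drop I.length K]
    rw [List.map_append, List.prod_append, mul_def, adjoint_comp, comp_assoc]
  change (adjoint (K.map S).prod ∘L (I.map S).prod) y ∈ M
  rw [hsplit, adjoint_list_prod_map_comp_of_length_eq S hS (by simpa using hK)]
  split_ifs
  · exact adjoint_list_prod_map_apply_mem S hM _ hy
  · simp

end CuntzWords

theorem Submodule.norm_sub_starProjection_le {𝕜 E : Type*} [RCLike 𝕜] [NormedAddCommGroup E]
    [InnerProductSpace 𝕜 E] (M : Submodule 𝕜 E) [M.HasOrthogonalProjection] (x : E) {w : E}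
    (hw : w ∈ M) : ‖x - M.starProjection x‖ ≤ ‖x - w‖ := by
  rw [starProjection_minimal]
  exact ciInf_le ⟨0, by rintro _ ⟨y, rfl⟩; positivity⟩ (⟨w, hw⟩ : M)

theorem cuntz_cyclic_invariant_asymptotic_general
    {H : Type*} [NormedAddCommGroup H] [InnerProductSpace ℂ H] [CompleteSpace H]
    (N : ℕ) (S : Fin N → H →L[ℂ] H)
    (hiso : ∀ i j : Fin N, adjoint (S i) ∘L S j = if i = j then 1 else 0)
    (M : Submodule ℂ H) [CompleteSpace M]
    (hinv : ∀ i : Fin N, ∀ x ∈ M, adjoint (S i) x ∈ M)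
    (hcyc : (Submodule.span ℂ {x : H | ∃ (I J : List (Fin N)) (u : H), u ∈ M ∧
        ((I.map S).prod ∘L adjoint ((J.map S).prod)) u = x}).topologicalClosure = ⊤)
    (P : H →L[ℂ] H) (hP : P = M.subtypeL ∘L M.orthogonalProjection) :
    ∀ v : H, ∀ ε : ℝ, 0 < ε → ∃ nε : ℕ, ∀ I : List (Fin N), nε ≤ I.length →
      ‖P (adjoint ((I.map S).prod) v) - adjoint ((I.map S).prod) v‖ < ε := by
  intro v ε hε
  have hspan_le : Submodule.span ℂ {x : H | ∃ (I J : List (Fin N)) (u : H), u ∈ M ∧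
      ((I.map S).prod ∘L adjoint ((J.map S).prod)) u = x} ≤ eventuallyAbsorbed S M :=
    Submodule.span_le.mpr <| by
      rintro _ ⟨I, J, u, hu, rfl⟩
      exact list_prod_map_comp_adjoint_apply_mem_eventuallyAbsorbed S hiso hinv I J hu
  obtain ⟨w, hw, hvw⟩ :=
    (Submodule.dense_iff_topologicalClosure_eq_top.mpr hcyc).exists_dist_lt v hε
  obtain ⟨n, hn⟩ := hspan_le hw
  refine ⟨n, fun I hI ↦ ?_⟩
  set T := adjoint (I.map S).prod
  have hT := adjoint_comp_self_list_prod_map S (fun i ↦ by simpa using hiso i i) I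
  subst hP
  calc ‖M.starProjection (T v) - T v‖ = ‖T v - M.starProjection (T v)‖ := norm_sub_rev _ _
    _ ≤ ‖T v - T w‖ := M.norm_sub_starProjection_le _ (hn I hI)
    _ = ‖T (v - w)‖ := by rw [map_sub]
    _ ≤ ‖v - w‖ := norm_adjoint_apply_le_of_adjoint_comp_self hT _
    _ < ε := by rwa [← dist_eq_norm]

/-- for a cyclic `(S i*)`-invariant closed subspace `M`, for every `v` and
`ε > 0` there is `n_ε` with `‖P_M S_I* v − S_I* v‖ < ε` whenever `|I| ≥ n_ε`. -/
theorem cuntz_cyclic_invariant_asymptotic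
    {H : Type*} [NormedAddCommGroup H] [InnerProductSpace ℂ H] [CompleteSpace H]
    (N : ℕ) (hN : 2 ≤ N) (S : Fin N → H →L[ℂ] H)
    (hiso : ∀ i j : Fin N, adjoint (S i) ∘L S j = if i = j then 1 else 0)
    (hsum : ∑ i : Fin N, S i ∘L adjoint (S i) = 1)
    (M : Submodule ℂ H) [CompleteSpace M]
    (hinv : ∀ i : Fin N, ∀ x ∈ M, adjoint (S i) x ∈ M)
    (hcyc : (Submodule.span ℂ {x : H | ∃ (I J : List (Fin N)) (u : H), u ∈ M ∧
        ((I.map S).prod ∘L adjoint ((J.map S).prod)) u = x}).topologicalClosure = ⊤)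
    (P : H →L[ℂ] H) (hP : P = M.subtypeL ∘L M.orthogonalProjection) :
    ∀ v : H, ∀ ε : ℝ, 0 < ε → ∃ nε : ℕ, ∀ I : List (Fin N), nε ≤ I.length →
      ‖P (adjoint ((I.map S).prod) v) - adjoint ((I.map S).prod) v‖ < ε :=
  cuntz_cyclic_invariant_asymptotic_general N S hiso M hinv hcyc P hP
end

section
/- Let S_0,…,S_{N-1} satisfy the Cuntz relations on H, and let ω = (ω_1, ω_2, …) be an infinite word in {0,…,N-1}^ℕ that is not eventually periodic (there are no k ≠ k' with σ^k(ω) = σ^{k'}(ω), where σ is the left shift). Suppose v ∈ H is a unit vector such that S_{ω_1…ω_k} S_{ω_1…ω_k}* v = v for every k ≥ 1. If M is a finite-dimensional cyclic subspace invariant for all S_i*, then v = 0; i.e., no such nonzero vector exists. -/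
/-!
Put `x k = T_k† v` with `T_k = S_{ω 0} ⋯ S_{ω (k-1)}`. The hypothesis on `v` gives
`x k = S_{ω k} (x (k+1))`, so the `x k` are unit vectors, and they are pairwise orthogonal
because two distinct shifts of `ω` differ at some place while words of equal length satisfy
`T_I† T_J = 0` for `I ≠ J`. As `M` is invariant under the `S_i†`, the norms `‖P_M (x k)‖` are
nondecreasing; by Bessel's inequality and `dim M < ∞` they tend to `0`, so every `x k` is
orthogonal to `M`. Then `v = x 0` is orthogonal to all `S_I S_J† u` with `u ∈ M`, which span a
dense subspace, so `v = 0`.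
-/

open ContinuousLinearMap Filter Topology InnerProductSpace

section StarMul

variable {A ι : Type*} [MonoidWithZero A] [StarMul A] [DecidableEq ι]

theorem star_prod_map_mul_prod_map {s : ι → A}
    (hs : ∀ i j, star (s i) * s j = if i = j then 1 else 0) :
    ∀ {I J : List ι}, I.length = J.length →
      star (I.map s).prod * (J.map s).prod = if I = J then 1 else 0
  | [], [], _ => by simp
  | i :: I, j :: J, h => by
    have ih := star_prod_map_mul_prod_map hs (I := I) (J := J) (by simpa using h)
    simp only [List.map_cons, List.prod_cons, star_mul, List.cons.injEq]
    rw [mul_assoc, ← mul_assoc (star (s i)), hs]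
    by_cases hij : i = j
    · simp [hij, ih]
    · simp [hij]

end StarMul

section InnerProductSpace

variable {𝕜 E ι : Type*} [RCLike 𝕜] [NormedAddCommGroup E] [InnerProductSpace 𝕜 E]

theorem Orthonormal.tendsto_inner_cofinite_zero {e : ι → E} (he : Orthonormal 𝕜 e) (x : E) :
    Tendsto (fun i => ⟪x, e i⟫_𝕜) cofinite (𝓝 0) := by
  rw [tendsto_zero_iff_norm_tendsto_zero]
  simpa [norm_inner_symm x] using (he.inner_products_summable x).tendsto_cofinite_zero.sqrt

theorem Orthonormal.tendsto_starProjection_cofinite_zero {e : ι → E} (he : Orthonormal 𝕜 e)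
    (K : Submodule 𝕜 E) [FiniteDimensional 𝕜 K] :
    Tendsto (fun i => K.starProjection (e i)) cofinite (𝓝 0) := by
  let b := stdOrthonormalBasis 𝕜 K
  have hP : ∀ i, K.starProjection (e i) = ∑ j, ⟪(b j : E), e i⟫_𝕜 • (b j : E) := fun i => by
    rw [K.starProjection_apply, b.orthogonalProjectionOnto_apply_eq_sum]
    push_cast
    rfl
  simpa [hP] using tendsto_finsetSum Finset.univ fun j _ =>
    (he.tendsto_inner_cofinite_zero (b j : E)).smul_const (b j : E)

variable [CompleteSpace E]

theorem eq_zero_of_forall_inner_eq_zero_of_dense {s : Set E}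
    (hs : (Submodule.span 𝕜 s).topologicalClosure = ⊤) {x : E} (hx : ∀ y ∈ s, ⟪y, x⟫_𝕜 = 0) :
    x = 0 := by
  have hx' : x ∈ (Submodule.span 𝕜 s)ᗮ :=
    Submodule.isOrtho_iff_le.mp (Submodule.isOrtho_span.mpr fun y hy z hz =>
      (Set.mem_singleton_iff.mp hz) ▸ hx y hy).symm (Submodule.mem_span_singleton_self x)
  rwa [Submodule.topologicalClosure_eq_top_iff.mp hs, Submodule.mem_bot] at hx'

theorem norm_le_one_of_adjoint_comp_self_eq_one {A : E →L[𝕜] E} (hA : adjoint A ∘L A = 1) :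
    ‖A‖ ≤ 1 :=
  A.opNorm_le_bound zero_le_one fun x => by rw [(norm_map_iff_adjoint_comp_self A).mpr hA, one_mul]

/-- Since `K` is `A†`-invariant, `Kᗮ` is `A`-invariant, so `P A = P A P` for the projection `P`
onto `K`. -/
theorem norm_starProjection_apply_le_of_adjoint_mem (K : Submodule 𝕜 E)
    [K.HasOrthogonalProjection] {A : E →L[𝕜] E} (hA : ‖A‖ ≤ 1)
    (hK : ∀ u ∈ K, adjoint A u ∈ K) (x : E) :
    ‖K.starProjection (A x)‖ ≤ ‖K.starProjection x‖ := by
  have hAperp : ∀ w ∈ Kᗮ, A w ∈ Kᗮ := fun w hw u hu => by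
    rw [← adjoint_inner_left]
    exact hw _ (hK u hu)
  have hPA : K.starProjection (A x) = K.starProjection (A (K.starProjection x)) := by
    rw [← sub_eq_zero, ← map_sub, ← map_sub, K.starProjection_apply_eq_zero_iff]
    exact hAperp _ (K.sub_starProjection_mem_orthogonal x)
  calc ‖K.starProjection (A x)‖ = ‖K.starProjection (A (K.starProjection x))‖ := by rw [hPA]
    _ ≤ ‖A (K.starProjection x)‖ := K.norm_starProjection_apply_le _
    _ ≤ ‖K.starProjection x‖ := by simpa using A.le_of_opNorm_le hA (K.starProjection x)

theorem adjoint_prod_map_comp_prod_map [DecidableEq ι] {S : ι → E →L[𝕜] E}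
    (hS : ∀ i j, adjoint (S i) ∘L S j = if i = j then 1 else 0) {I J : List ι}
    (h : I.length = J.length) :
    adjoint (I.map S).prod ∘L (J.map S).prod = if I = J then 1 else 0 :=
  star_prod_map_mul_prod_map hS h

theorem adjoint_prod_map_apply_mem {S : ι → E →L[𝕜] E} {K : Submodule 𝕜 E}
    (hK : ∀ i, ∀ u ∈ K, adjoint (S i) u ∈ K) (J : List ι) {u : E} (hu : u ∈ K) :
    adjoint (J.map S).prod u ∈ K := by
  induction J generalizing u with
  | nil => rwa [List.map_nil, List.prod_nil, adjoint_one]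
  | cons j J ih =>
    rw [List.map_cons, List.prod_cons, mul_def, adjoint_comp, comp_apply]
    exact ih (hK j u hu)

end InnerProductSpace

section Word

variable {𝕜 E ι : Type*} [RCLike 𝕜] [NormedAddCommGroup E] [InnerProductSpace 𝕜 E]
  {S : ι → E →L[𝕜] E} {ω : ℕ → ι}

theorem apply_eq_prod_map_ofFn_apply_add {x : ℕ → E} (hx : ∀ k, x k = S (ω k) (x (k + 1)))
    (k m : ℕ) : x k = ((List.ofFn fun j : Fin m => ω (j + k)).map S).prod (x (k + m)) := by
  induction m generalizing k with
  | zero => simp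
  | succ m ih =>
    rw [List.ofFn_succ, List.map_cons, List.prod_cons, mul_apply_eq_comp, hx k, ih (k + 1)]
    simp only [Fin.val_succ, Fin.val_zero, zero_add, add_assoc, add_comm 1]

variable [CompleteSpace E] [DecidableEq ι]

theorem adjoint_prod_map_ofFn_apply_eq_apply_adjoint_succ
    (hS : ∀ i j, adjoint (S i) ∘L S j = if i = j then 1 else 0) {v : E} {k : ℕ}
    (hv : (((List.ofFn fun j : Fin (k + 1) => ω j).map S).prod ∘L
      adjoint (((List.ofFn fun j : Fin (k + 1) => ω j).map S).prod)) v = v) :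
    adjoint (((List.ofFn fun j : Fin k => ω j).map S).prod) v =
      S (ω k) (adjoint (((List.ofFn fun j : Fin (k + 1) => ω j).map S).prod) v) := by
  have hsucc : ((List.ofFn fun j : Fin (k + 1) => ω j).map S).prod =
      ((List.ofFn fun j : Fin k => ω j).map S).prod * S (ω k) := by
    rw [List.ofFn_succ', List.concat_eq_append, List.map_append, List.prod_append]
    simp only [List.map_singleton, List.prod_singleton, Fin.val_castSucc, Fin.val_last]
  conv_lhs => rw [← hv]
  rw [comp_apply, hsucc, mul_apply_eq_comp, ← comp_apply (adjoint _),
    adjoint_prod_map_comp_prod_map hS rfl, if_pos rfl, one_apply_eq_self]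

theorem orthonormal_of_eq_apply_succ (hS : ∀ i j, adjoint (S i) ∘L S j = if i = j then 1 else 0)
    (hω : ∀ k k' : ℕ, k ≠ k' → (fun n => ω (n + k)) ≠ (fun n => ω (n + k')))
    {x : ℕ → E} (hx : ∀ k, x k = S (ω k) (x (k + 1))) (hx0 : ‖x 0‖ = 1) :
    Orthonormal 𝕜 x := by
  refine ⟨fun k => ?_, fun k k' hkk' => ?_⟩
  · induction k with
    | zero => exact hx0
    | succ k ih =>
      rwa [hx k, (norm_map_iff_adjoint_comp_self _).mpr (by simpa using hS (ω k) (ω k))] at ih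
  · obtain ⟨n, hn⟩ := Function.ne_iff.mp (hω k k' hkk')
    have hne : (List.ofFn fun j : Fin (n + 1) => ω (j + k')) ≠
        List.ofFn fun j : Fin (n + 1) => ω (j + k) := fun h =>
      hn (congrFun (List.ofFn_inj.mp h) (Fin.last n)).symm
    rw [apply_eq_prod_map_ofFn_apply_add hx k (n + 1),
      apply_eq_prod_map_ofFn_apply_add hx k' (n + 1), ← adjoint_inner_left, ← comp_apply,
      adjoint_prod_map_comp_prod_map hS (by simp), if_neg hne, zero_apply, inner_zero_left]

theorem inner_prod_map_comp_adjoint_apply_eq_zero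
    (hS : ∀ i j, adjoint (S i) ∘L S j = if i = j then 1 else 0) {K : Submodule 𝕜 E}
    (hK : ∀ i, ∀ u ∈ K, adjoint (S i) u ∈ K) {x : ℕ → E}
    (hx : ∀ k, x k = S (ω k) (x (k + 1))) (hxK : ∀ k, x k ∈ Kᗮ) (I J : List ι) {u : E}
    (hu : u ∈ K) : ⟪((I.map S).prod ∘L adjoint (J.map S).prod) u, x 0⟫_𝕜 = 0 := by
  rw [comp_apply, ← adjoint_inner_right, apply_eq_prod_map_ofFn_apply_add hx 0 I.length,
    ← comp_apply, adjoint_prod_map_comp_prod_map hS (by simp)]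
  split_ifs
  · exact hxK _ _ (adjoint_prod_map_apply_mem hK J hu)
  · rw [zero_apply, inner_zero_right]

end Word

theorem cuntz_no_nonperiodic_atom_of_finiteDimensional_cyclic_invariant_general
    {H : Type*} [NormedAddCommGroup H] [InnerProductSpace ℂ H] [CompleteSpace H]
    (N : ℕ) (S : Fin N → H →L[ℂ] H)
    (hiso : ∀ i j : Fin N, adjoint (S i) ∘L S j = if i = j then 1 else 0)
    (ω : ℕ → Fin N)
    (hnp : ∀ k k' : ℕ, k ≠ k' → (fun n => ω (n + k)) ≠ (fun n => ω (n + k')))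
    (v : H) (hv : ‖v‖ = 1)
    (hfix : ∀ k : ℕ, 1 ≤ k →
      (((List.ofFn fun j : Fin k => ω j).map S).prod ∘L
        adjoint (((List.ofFn fun j : Fin k => ω j).map S).prod)) v = v)
    (M : Submodule ℂ H) [FiniteDimensional ℂ M]
    (hinv : ∀ i : Fin N, ∀ x ∈ M, adjoint (S i) x ∈ M)
    (hcyc : (Submodule.span ℂ {x : H | ∃ (I J : List (Fin N)) (u : H), u ∈ M ∧
        ((I.map S).prod ∘L adjoint ((J.map S).prod)) u = x}).topologicalClosure = ⊤) :
    False := by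
  set x : ℕ → H := fun k => adjoint (((List.ofFn fun j : Fin k => ω j).map S).prod) v
  have hx : ∀ k, x k = S (ω k) (x (k + 1)) := fun k =>
    adjoint_prod_map_ofFn_apply_eq_apply_adjoint_succ hiso (hfix (k + 1) (Nat.le_add_left 1 k))
  have hx0 : x 0 = v := by simp [x, adjoint_one]
  obtain ⟨k₀, hk₀⟩ : ∃ k, M.starProjection (x k) ≠ 0 := by
    by_contra! h
    refine one_ne_zero (hv.symm.trans (norm_eq_zero.mpr ?_))
    refine hx0 ▸ eq_zero_of_forall_inner_eq_zero_of_dense hcyc ?_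
    rintro _ ⟨I, J, u, hu, rfl⟩
    exact inner_prod_map_comp_adjoint_apply_eq_zero hiso hinv hx
      (fun k => M.starProjection_apply_eq_zero_iff.mp (h k)) I J hu
  have hmono : Monotone fun k => ‖M.starProjection (x k)‖ := monotone_nat_of_le_succ fun k => by
    rw [hx k]
    exact norm_starProjection_apply_le_of_adjoint_mem M
      (norm_le_one_of_adjoint_comp_self_eq_one (by simpa using hiso (ω k) (ω k))) (hinv _) _
  have hlim : Tendsto (fun k => ‖M.starProjection (x k)‖) atTop (𝓝 0) := by
    have hon : Orthonormal ℂ x := orthonormal_of_eq_apply_succ hiso hnp hx (hx0 ▸ hv)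
    simpa [Nat.cofinite_eq_atTop] using (hon.tendsto_starProjection_cofinite_zero M).norm
  exact hk₀ (norm_le_zero_iff.mp (hmono.ge_of_tendsto hlim k₀))

/-- in a representation of `O_N` with a finite dimensional cyclic
`(S i*)`-invariant subspace, there is no unit vector in the atom of a non-periodic
infinite word `ω`. -/
theorem cuntz_no_nonperiodic_atom_of_finiteDimensional_cyclic_invariant
    {H : Type*} [NormedAddCommGroup H] [InnerProductSpace ℂ H] [CompleteSpace H]
    (N : ℕ) (hN : 2 ≤ N) (S : Fin N → H →L[ℂ] H)
    (hiso : ∀ i j : Fin N, adjoint (S i) ∘L S j = if i = j then 1 else 0)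
    (hsum : ∑ i : Fin N, S i ∘L adjoint (S i) = 1)
    (ω : ℕ → Fin N)
    (hnp : ∀ k k' : ℕ, k ≠ k' → (fun n => ω (n + k)) ≠ (fun n => ω (n + k')))
    (v : H) (hv : ‖v‖ = 1)
    (hfix : ∀ k : ℕ, 1 ≤ k →
      (((List.ofFn fun j : Fin k => ω j).map S).prod ∘L
        adjoint (((List.ofFn fun j : Fin k => ω j).map S).prod)) v = v)
    (M : Submodule ℂ H) [FiniteDimensional ℂ M]
    (hinv : ∀ i : Fin N, ∀ x ∈ M, adjoint (S i) x ∈ M)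
    (hcyc : (Submodule.span ℂ {x : H | ∃ (I J : List (Fin N)) (u : H), u ∈ M ∧
        ((I.map S).prod ∘L adjoint ((J.map S).prod)) u = x}).topologicalClosure = ⊤) :
    False :=
  cuntz_no_nonperiodic_atom_of_finiteDimensional_cyclic_invariant_general N S hiso ω hnp v hv hfix M
    hinv hcyc
end
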